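/- arXiv:1807.04467 — 8 statements merged into one kernel-verified Lean document; each statement's English description precedes it below -/
import Mathlib

section
/- Let (aᵏ) and (bᵏ) be bounded sequences in Z = L²(Ω). If min{aᵏ, bᵏ} → 0 strongly in Z, then ⟨aᵏ, bᵏ⟩ → 0. -/
open MeasureTheory Filter
open scoped InnerProductSpace

/-
Write `m = min{a, b}`. Pointwise one of `a - m`, `b - m` vanishes, so these two functions are
orthogonal in `L²`; expanding `⟪a - m, b - m⟫ = 0` gives `⟪a, b⟫ = ⟪a, m⟫ + ⟪m, b⟫ - ⟪m, m⟫`,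
and each term on the right is an inner product of a bounded sequence with one tending to `0`.
-/

theorem sub_min_mul_sub_min_eq_zero {α : Type*} [Ring α] [LinearOrder α] (x y : α) :
    (x - min x y) * (y - min x y) = 0 := by
  rcases le_total x y with h | h <;> simp [h]

theorem inner_sub_inf_sub_inf_eq_zero {Ω : Type*} [MeasurableSpace Ω] {μ : Measure Ω}
    (f g : Lp ℝ 2 μ) : ⟪f - f ⊓ g, g - f ⊓ g⟫_ℝ = 0 := by
  rw [L2.inner_def]
  refine integral_eq_zero_of_ae ?_
  filter_upwards [Lp.coeFn_sub f (f ⊓ g), Lp.coeFn_sub g (f ⊓ g), Lp.coeFn_inf f g]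
    with x hfm hgm hm
  simp only [hfm, hgm, hm, Pi.sub_apply, Pi.inf_apply, Real.inner_apply, Pi.zero_apply]
  exact sub_min_mul_sub_min_eq_zero _ _

section InnerProductSpace

variable {ι 𝕜 E : Type*} [RCLike 𝕜] [SeminormedAddCommGroup E] [InnerProductSpace 𝕜 E]

theorem inner_sub_sub_eq (x y m : E) :
    ⟪x - m, y - m⟫_𝕜 = ⟪x, y⟫_𝕜 - ⟪x, m⟫_𝕜 - ⟪m, y⟫_𝕜 + ⟪m, m⟫_𝕜 := by
  simp only [inner_sub_left, inner_sub_right]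
  ring

variable {l : Filter ι} {f g : ι → E}

theorem Filter.Tendsto.inner_zero_isBoundedUnder_le (hf : Tendsto f l (nhds 0))
    (hg : IsBoundedUnder (· ≤ ·) l ((‖·‖) ∘ g)) :
    Tendsto (fun i => ⟪f i, g i⟫_𝕜) l (nhds 0) :=
  hf.op_zero_isBoundedUnder_le hg _ norm_inner_le_norm

theorem Filter.IsBoundedUnder.inner_tendsto_zero (hf : IsBoundedUnder (· ≤ ·) l ((‖·‖) ∘ f))
    (hg : Tendsto g l (nhds 0)) :
    Tendsto (fun i => ⟪f i, g i⟫_𝕜) l (nhds 0) :=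
  hg.op_zero_isBoundedUnder_le hf (fun y x => ⟪x, y⟫_𝕜) fun y x =>
    (norm_inner_le_norm x y).trans_eq (mul_comm _ _)

end InnerProductSpace

/-- **Lemma 2.1.** If `(aᵏ)`, `(bᵏ)` are bounded sequences in
`Z = L²(Ω)` and `min{aᵏ, bᵏ} → 0` strongly in `Z`, then `⟪aᵏ, bᵏ⟫ → 0`. -/
theorem inner_tendsto_zero_of_min_tendsto_zero
    {Ω : Type*} [MeasurableSpace Ω] (μ : Measure Ω)
    (a b : ℕ → Lp ℝ 2 μ)
    (ha : ∃ C : ℝ, ∀ k, ‖a k‖ ≤ C)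
    (hb : ∃ C : ℝ, ∀ k, ‖b k‖ ≤ C)
    (hmin : Tendsto (fun k => a k ⊓ b k) atTop (nhds 0)) :
    Tendsto (fun k => (inner ℝ (a k) (b k) : ℝ)) atTop (nhds 0) := by
  have ha' : IsBoundedUnder (· ≤ ·) atTop (norm ∘ a) := isBoundedUnder_of ha
  have hb' : IsBoundedUnder (· ≤ ·) atTop (norm ∘ b) := isBoundedUnder_of hb
  have hexpand : ∀ k, ⟪a k, b k⟫_ℝ =
      ⟪a k, a k ⊓ b k⟫_ℝ + ⟪a k ⊓ b k, b k⟫_ℝ - ⟪a k ⊓ b k, a k ⊓ b k⟫_ℝ := fun k => by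
    linear_combination (inner_sub_sub_eq (a k) (b k) (a k ⊓ b k)).symm.trans
      (inner_sub_inf_sub_inf_eq_zero (a k) (b k))
  simp_rw [hexpand]
  simpa using ((ha'.inner_tendsto_zero (𝕜 := ℝ) hmin).add
    (hmin.inner_zero_isBoundedUnder_le (𝕜 := ℝ) hb')).sub (hmin.inner (𝕜 := ℝ) hmin)
end

section
/- Let X, Z be real Hilbert (or Banach) spaces, f : X → ℝ, g : X → Z weakly sequentially lower semicontinuous in the sense that f and x ↦ ‖g₊(x)‖_Z are weakly lsc. Let ρₖ → ∞, let (wᵏ) be bounded in Z, and suppose (x^{k+1}) satisfies L_{ρₖ}(x^{k+1}, wᵏ) ≤ L_{ρₖ}(x, wᵏ) + εₖ for all x ∈ X with εₖ bounded, where L_ρ(x, w) = f(x) + (ρ/2)‖(g(x) + w/ρ)₊‖². If x̄ is a weak limit point of (x^{k+1}) along a subsequence on which f(x^{k+1}) is bounded below, then x̄ is a global minimizer of x ↦ ‖g₊(x)‖²_Z over X. -/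
/-!
Testing the inexact minimality of `x^{k+1}` against an arbitrary `x` and using the lower bound
on `f` gives `(ρ/2)‖(g(x^{k+1}) + w/ρ)₊‖² ≤ (ρ/2)‖(g x + w/ρ)₊‖² + D` along the subsequence.
As the positive part is 1-Lipschitz, `‖g₊(x^{k+1})‖ ≤ ‖g₊(x)‖ + 2‖w‖/ρ + √(2D/ρ)`, and the error
vanishes as `ρ → ∞`; weak lower semicontinuity of `‖g₊‖` carries the bound over to `x̄`.
-/

open MeasureTheory Filter Topology

theorem Real.le_add_sqrt_of_sq_le_sq_add {a b t : ℝ} (hb : 0 ≤ b) (h : a ^ 2 ≤ b ^ 2 + t) :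
    a ≤ b + √t := by
  by_contra! hlt
  nlinarith [Real.sqrt_nonneg t, Real.sq_sqrt' (x := t), le_max_left t 0]

theorem Filter.liminf_le_of_eventually_le_add {ι : Type*} {l : Filter ι} [l.NeBot]
    {s u : ι → ℝ} {c : ℝ} (hs : IsBoundedUnder (· ≥ ·) l s) (hsu : ∀ᶠ i in l, s i ≤ c + u i)
    (hu : Tendsto u l (𝓝 0)) : liminf s l ≤ c := by
  have hcu : Tendsto (fun i => c + u i) l (𝓝 c) := by simpa using tendsto_const_nhds.add hu
  calc liminf s l ≤ liminf (fun i => c + u i) l :=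
        liminf_le_liminf hsu hs hcu.isBoundedUnder_le.isCoboundedUnder_ge
    _ = c := hcu.liminf_eq

section NormedLattice

variable {α : Type*} [NormedAddCommGroup α] [Lattice α] [HasSolidNorm α] [IsOrderedAddMonoid α]

theorem norm_sup_zero_le_norm_sup_zero_add_norm_sub (a b : α) :
    ‖a ⊔ 0‖ ≤ ‖b ⊔ 0‖ + ‖a - b‖ :=
  calc ‖a ⊔ 0‖ ≤ ‖b ⊔ 0‖ + ‖a ⊔ 0 - b ⊔ 0‖ := norm_le_insert' _ _
    _ ≤ ‖b ⊔ 0‖ + ‖a - b‖ := by gcongr; exact norm_sup_sub_sup_le_norm a b 0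

theorem norm_sup_zero_le_of_penalty_le [NormedSpace ℝ α] {ρ D : ℝ} (hρ : 0 < ρ) {a b w : α}
    (h : ρ / 2 * ‖(a + ρ⁻¹ • w) ⊔ 0‖ ^ 2 ≤ ρ / 2 * ‖(b + ρ⁻¹ • w) ⊔ 0‖ ^ 2 + D) :
    ‖a ⊔ 0‖ ≤ ‖b ⊔ 0‖ + (2 * (ρ⁻¹ * ‖w‖) + √(2 * D / ρ)) := by
  have hshift : ‖ρ⁻¹ • w‖ = ρ⁻¹ * ‖w‖ := by
    rw [norm_smul, Real.norm_of_nonneg (inv_nonneg.2 hρ.le)]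
  have ha : ‖a ⊔ 0‖ ≤ ‖(a + ρ⁻¹ • w) ⊔ 0‖ + ρ⁻¹ * ‖w‖ := by
    simpa [hshift] using norm_sup_zero_le_norm_sup_zero_add_norm_sub a (a + ρ⁻¹ • w)
  have hb : ‖(b + ρ⁻¹ • w) ⊔ 0‖ ≤ ‖b ⊔ 0‖ + ρ⁻¹ * ‖w‖ := by
    simpa [hshift] using norm_sup_zero_le_norm_sup_zero_add_norm_sub (b + ρ⁻¹ • w) b
  have hsq : ‖(a + ρ⁻¹ • w) ⊔ 0‖ ^ 2 ≤ ‖(b + ρ⁻¹ • w) ⊔ 0‖ ^ 2 + 2 * D / ρ := by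
    rw [← sub_le_iff_le_add', le_div_iff₀ hρ]
    linarith
  linarith [Real.le_add_sqrt_of_sq_le_sq_add (norm_nonneg _) hsq]

end NormedLattice

theorem weak_limit_minimizes_constraint_violation_general
    {X : Type*} [NormedAddCommGroup X] [NormedSpace ℝ X]
    {Ω : Type*} [MeasurableSpace Ω] (μ : Measure Ω)
    (f : X → ℝ) (g : X → Lp ℝ 2 μ)
    (hglsc : ∀ (x : X) (xk : ℕ → X),
      (∀ φ : X →L[ℝ] ℝ, Tendsto (fun k => φ (xk k)) atTop (nhds (φ x))) →
      ‖(g x) ⊔ 0‖ ≤ atTop.liminf (fun k => ‖(g (xk k)) ⊔ 0‖))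
    (ρ : ℕ → ℝ) (hρ : Tendsto ρ atTop atTop)
    (w : ℕ → Lp ℝ 2 μ) (hw : ∃ C : ℝ, ∀ k, ‖w k‖ ≤ C)
    (ε : ℕ → ℝ) (hε : ∃ E : ℝ, ∀ k, ε k ≤ E)
    (xs : ℕ → X)
    (hmin : ∀ k : ℕ, ∀ x : X,
      f (xs (k + 1)) + (ρ k / 2) * ‖(g (xs (k + 1)) + (ρ k)⁻¹ • w k) ⊔ 0‖ ^ 2 ≤
        f x + (ρ k / 2) * ‖(g x + (ρ k)⁻¹ • w k) ⊔ 0‖ ^ 2 + ε k)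
    (xbar : X) (φs : ℕ → ℕ) (hφs : StrictMono φs)
    (hweak : ∀ φ : X →L[ℝ] ℝ,
      Tendsto (fun n => φ (xs (φs n + 1))) atTop (nhds (φ xbar)))
    (hfb : ∃ m : ℝ, ∀ n, m ≤ f (xs (φs n + 1))) :
    ∀ x : X, ‖(g xbar) ⊔ 0‖ ^ 2 ≤ ‖(g x) ⊔ 0‖ ^ 2 := by
  intro x
  obtain ⟨C, hC⟩ := hw
  obtain ⟨E, hE⟩ := hε
  obtain ⟨m, hm⟩ := hfb
  set D := f x - m + E
  have hρsub : Tendsto (fun n => ρ (φs n)) atTop atTop := hρ.comp hφs.tendsto_atTop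
  have hviol : ∀ᶠ n in atTop, ‖g (xs (φs n + 1)) ⊔ 0‖ ≤
      ‖g x ⊔ 0‖ + (2 * ((ρ (φs n))⁻¹ * C) + √(2 * D / ρ (φs n))) := by
    filter_upwards [hρsub.eventually_gt_atTop 0] with n hρn
    have hpen : ρ (φs n) / 2 * ‖(g (xs (φs n + 1)) + (ρ (φs n))⁻¹ • w (φs n)) ⊔ 0‖ ^ 2 ≤
        ρ (φs n) / 2 * ‖(g x + (ρ (φs n))⁻¹ • w (φs n)) ⊔ 0‖ ^ 2 + D := by
      linarith [hmin (φs n) x, hm n, hE (φs n)]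
    have hCn : (ρ (φs n))⁻¹ * ‖w (φs n)‖ ≤ (ρ (φs n))⁻¹ * C :=
      mul_le_mul_of_nonneg_left (hC _) (inv_nonneg.2 hρn.le)
    linarith [norm_sup_zero_le_of_penalty_le hρn hpen]
  have herr : Tendsto (fun n => 2 * ((ρ (φs n))⁻¹ * C) + √(2 * D / ρ (φs n))) atTop (𝓝 0) := by
    have hinv := hρsub.inv_tendsto_atTop
    have hquot : Tendsto (fun n => 2 * D / ρ (φs n)) atTop (𝓝 0) := by
      simpa [div_eq_mul_inv] using hinv.const_mul (2 * D)
    simpa using ((hinv.mul_const C).const_mul 2).add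
      ((Real.continuous_sqrt.tendsto' 0 0 Real.sqrt_zero).comp hquot)
  have hlim : atTop.liminf (fun n => ‖g (xs (φs n + 1)) ⊔ 0‖) ≤ ‖g x ⊔ 0‖ :=
    liminf_le_of_eventually_le_add (isBoundedUnder_of ⟨0, fun _ => norm_nonneg _⟩) hviol herr
  gcongr
  exact (hglsc xbar _ hweak).trans hlim

/-- **Theorem 4.2 (a), case `ρₖ → ∞`.** Let `f : X → ℝ` and
`x ↦ ‖g₊(x)‖` be weakly sequentially lsc, `ρₖ → ∞`, `(wᵏ)` bounded in
`Z = L²(Ω)`, and let `x^{k+1}` minimize the augmented Lagrangian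
`L_ρ(x,w) = f(x) + (ρ/2)‖(g(x) + w/ρ)₊‖²` up to a bounded error `εₖ`.
Then every weak limit point `xbar` of `(x^{k+1})` along a subsequence on which
`f(x^{k+1})` is bounded below globally minimizes `x ↦ ‖g₊(x)‖²`. -/
theorem weak_limit_minimizes_constraint_violation
    {X : Type*} [NormedAddCommGroup X] [NormedSpace ℝ X] [CompleteSpace X]
    {Ω : Type*} [MeasurableSpace Ω] (μ : Measure Ω)
    (f : X → ℝ) (g : X → Lp ℝ 2 μ)
    (hflsc : ∀ (x : X) (xk : ℕ → X),
      (∀ φ : X →L[ℝ] ℝ, Tendsto (fun k => φ (xk k)) atTop (nhds (φ x))) →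
      f x ≤ atTop.liminf (fun k => f (xk k)))
    (hglsc : ∀ (x : X) (xk : ℕ → X),
      (∀ φ : X →L[ℝ] ℝ, Tendsto (fun k => φ (xk k)) atTop (nhds (φ x))) →
      ‖(g x) ⊔ 0‖ ≤ atTop.liminf (fun k => ‖(g (xk k)) ⊔ 0‖))
    (ρ : ℕ → ℝ) (hρpos : ∀ k, 0 < ρ k) (hρ : Tendsto ρ atTop atTop)
    (w : ℕ → Lp ℝ 2 μ) (hw : ∃ C : ℝ, ∀ k, ‖w k‖ ≤ C)
    (ε : ℕ → ℝ) (hε : ∃ E : ℝ, ∀ k, ε k ≤ E)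
    (xs : ℕ → X)
    (hmin : ∀ k : ℕ, ∀ x : X,
      f (xs (k + 1)) + (ρ k / 2) * ‖(g (xs (k + 1)) + (ρ k)⁻¹ • w k) ⊔ 0‖ ^ 2 ≤
        f x + (ρ k / 2) * ‖(g x + (ρ k)⁻¹ • w k) ⊔ 0‖ ^ 2 + ε k)
    (xbar : X) (φs : ℕ → ℕ) (hφs : StrictMono φs)
    (hweak : ∀ φ : X →L[ℝ] ℝ,
      Tendsto (fun n => φ (xs (φs n + 1))) atTop (nhds (φ xbar)))
    (hfb : ∃ m : ℝ, ∀ n, m ≤ f (xs (φs n + 1))) :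
    ∀ x : X, ‖(g xbar) ⊔ 0‖ ^ 2 ≤ ‖(g x) ⊔ 0‖ ^ 2 :=
  weak_limit_minimizes_constraint_violation_general μ f g hglsc ρ hρ w hw ε hε xs hmin xbar φs hφs
    hweak hfb
end

section
/- In the setting of the augmented Lagrangian method: let ρₖ → ∞, (wᵏ) bounded in Z, εₖ → 0, and suppose L_{ρₖ}(x^{k+1}, wᵏ) ≤ L_{ρₖ}(x, wᵏ) + εₖ for all x ∈ X, where L_ρ(x,w) = f(x) + (ρ/2)‖(g(x)+w/ρ)₊‖²_Z. If x is feasible (g(x) ≤ 0, i.e. g(x)₊ = 0 a.e.) and f is weakly sequentially lsc, then every weak limit point x̄ of (x^{k+1}) satisfies f(x̄) ≤ f(x). -/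
/-!
Feasibility of `x` gives `L_{ρₖ}(x, wᵏ) ≤ f x + ‖wᵏ‖² / (2ρₖ)`, so the approximate minimality of
`x^{k+1}` yields `f(x^{k+1}) ≤ f x + C² / (2ρₖ) + εₖ → f x`, and weak lower semicontinuity
concludes along the subsequence. Since `liminf` of a real sequence is a junk value unless the
sequence is bounded below, one also needs a lower bound on `f(x^{k+1})`; it comes from comparing
the iterates with the first one.
-/

open MeasureTheory Filter Topology

section SolidNorm

variable {E : Type*} [NormedAddCommGroup E] [Lattice E] [HasSolidNorm E] [IsOrderedAddMonoid E]

theorem norm_add_sup_zero_le_of_nonpos {z : E} (hz : z ≤ 0) (c : E) : ‖(z + c) ⊔ 0‖ ≤ ‖c‖ := by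
  refine HasSolidNorm.solid ?_
  rw [abs_of_nonneg le_sup_right]
  calc (z + c) ⊔ 0 ≤ c ⊔ 0 := sup_le_sup_right (add_le_of_nonpos_left hz) 0
    _ ≤ |c| := sup_le (le_abs_self c) (abs_nonneg c)

theorem norm_sup_zero_le_add_norm_sub (a b : E) : ‖a ⊔ 0‖ ≤ ‖b ⊔ 0‖ + ‖a - b‖ :=
  (norm_le_insert' _ _).trans (add_le_add_right (norm_sup_sub_sup_le_norm a b 0) _)

end SolidNorm

section AugmentedLagrangian

variable {X E : Type*} [NormedAddCommGroup E] [Lattice E] [NormedSpace ℝ E] (f : X → ℝ) (g : X → E)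

noncomputable def augLagrangian (ρ : ℝ) (w : E) (y : X) : ℝ :=
  f y + ρ / 2 * ‖(g y + ρ⁻¹ • w) ⊔ 0‖ ^ 2

theorem le_augLagrangian {ρ : ℝ} (hρ : 0 ≤ ρ) (w : E) (y : X) : f y ≤ augLagrangian f g ρ w y :=
  le_add_of_nonneg_right (by positivity)

variable [HasSolidNorm E] [IsOrderedAddMonoid E]

theorem augLagrangian_le_of_nonpos {ρ : ℝ} (hρ : 0 < ρ) (w : E) {y : X} (hy : g y ≤ 0) :
    augLagrangian f g ρ w y ≤ f y + ‖w‖ ^ 2 / (2 * ρ) := by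
  have hpen : ‖(g y + ρ⁻¹ • w) ⊔ 0‖ ≤ ρ⁻¹ * ‖w‖ := by
    simpa [norm_smul, abs_of_pos hρ] using norm_add_sup_zero_le_of_nonpos hy (ρ⁻¹ • w)
  calc augLagrangian f g ρ w y ≤ f y + ρ / 2 * (ρ⁻¹ * ‖w‖) ^ 2 := by
        unfold augLagrangian; gcongr
    _ = f y + ‖w‖ ^ 2 / (2 * ρ) := by field_simp

theorem two_mul_augLagrangian_le {ρ₀ ρ : ℝ} (hρ₀ : 0 ≤ ρ₀) (hρ : 4 * ρ₀ ≤ ρ) (w₀ w : E) (y : X) :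
    2 * augLagrangian f g ρ₀ w₀ y ≤
      f y + augLagrangian f g ρ w y + 2 * ρ₀ * ‖ρ₀⁻¹ • w₀ - ρ⁻¹ • w‖ ^ 2 := by
  set a := ‖(g y + ρ⁻¹ • w) ⊔ 0‖
  set D := ‖ρ₀⁻¹ • w₀ - ρ⁻¹ • w‖
  have hshift : ‖(g y + ρ₀⁻¹ • w₀) ⊔ 0‖ ≤ a + D := by
    simpa using norm_sup_zero_le_add_norm_sub (g y + ρ₀⁻¹ • w₀) (g y + ρ⁻¹ • w)
  have hsq : ‖(g y + ρ₀⁻¹ • w₀) ⊔ 0‖ ^ 2 ≤ 2 * a ^ 2 + 2 * D ^ 2 := by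
    nlinarith [norm_nonneg ((g y + ρ₀⁻¹ • w₀) ⊔ 0), sq_nonneg (a - D)]
  unfold augLagrangian
  nlinarith [mul_le_mul_of_nonneg_left hsq hρ₀, mul_le_mul_of_nonneg_right hρ (sq_nonneg a)]

variable {f g}

/-- Comparing with the fixed approximate minimizer `x₀` costs a penalty of parameter `ρ₀`, which
the penalty of parameter `ρ k` absorbs once `ρ k ≥ 4 ρ₀`. -/
theorem isBoundedUnder_ge_of_augLagrangian_le {ι : Type*} {l : Filter ι} {ρ₀ e₀ : ℝ} {w₀ : E}
    {x₀ : X} (hρ₀ : 0 ≤ ρ₀)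
    (hmin₀ : ∀ y, augLagrangian f g ρ₀ w₀ x₀ ≤ augLagrangian f g ρ₀ w₀ y + e₀)
    {ρ : ι → ℝ} {w : ι → E} {T : ι → ℝ} {ys : ι → X} (hρ : Tendsto ρ l atTop)
    (hshift : IsBoundedUnder (· ≤ ·) l fun k => ‖(ρ k)⁻¹ • w k‖)
    (hT : IsBoundedUnder (· ≤ ·) l T) (hupper : ∀ k, augLagrangian f g (ρ k) (w k) (ys k) ≤ T k) :
    IsBoundedUnder (· ≥ ·) l fun k => f (ys k) := by
  obtain ⟨S, hS⟩ := hshift.eventually_le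
  obtain ⟨B, hB⟩ := hT.eventually_le
  refine isBoundedUnder_of_eventually_ge
    (a := 2 * (f x₀ - e₀) - B - 2 * ρ₀ * (‖ρ₀⁻¹ • w₀‖ + S) ^ 2) ?_
  filter_upwards [hρ.eventually_ge_atTop (4 * ρ₀), hS, hB] with k hk hSk hBk
  have hD : ‖ρ₀⁻¹ • w₀ - (ρ k)⁻¹ • w k‖ ^ 2 ≤ (‖ρ₀⁻¹ • w₀‖ + S) ^ 2 := by
    gcongr
    exact (norm_sub_le _ _).trans (add_le_add_right hSk _)
  have := two_mul_augLagrangian_le f g hρ₀ hk w₀ (w k) (ys k)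
  nlinarith [hmin₀ (ys k), le_augLagrangian f g hρ₀ w₀ x₀, hupper k]

end AugmentedLagrangian

theorem weak_limit_optimal_on_feasible_general
    {X : Type*} [NormedAddCommGroup X] [NormedSpace ℝ X]
    {Ω : Type*} [MeasurableSpace Ω] (μ : Measure Ω)
    (f : X → ℝ) (g : X → Lp ℝ 2 μ)
    (hflsc : ∀ (x : X) (xk : ℕ → X),
      (∀ φ : X →L[ℝ] ℝ, Tendsto (fun k => φ (xk k)) atTop (nhds (φ x))) →
      f x ≤ atTop.liminf (fun k => f (xk k)))
    (ρ : ℕ → ℝ) (hρpos : ∀ k, 0 < ρ k) (hρ : Tendsto ρ atTop atTop)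
    (w : ℕ → Lp ℝ 2 μ) (hw : ∃ C : ℝ, ∀ k, ‖w k‖ ≤ C)
    (ε : ℕ → ℝ) (hε : Tendsto ε atTop (nhds 0))
    (xs : ℕ → X)
    (hmin : ∀ k : ℕ, ∀ x : X,
      f (xs (k + 1)) + (ρ k / 2) * ‖(g (xs (k + 1)) + (ρ k)⁻¹ • w k) ⊔ 0‖ ^ 2 ≤
        f x + (ρ k / 2) * ‖(g x + (ρ k)⁻¹ • w k) ⊔ 0‖ ^ 2 + ε k)
    (x : X) (hfeas : (g x) ⊔ 0 = 0)
    (xbar : X) (φs : ℕ → ℕ) (hφs : StrictMono φs)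
    (hweak : ∀ φ : X →L[ℝ] ℝ,
      Tendsto (fun n => φ (xs (φs n + 1))) atTop (nhds (φ xbar))) :
    f xbar ≤ f x := by
  obtain ⟨C, hC⟩ := hw
  have hshift : Tendsto (fun k => (ρ k)⁻¹ • w k) atTop (𝓝 0) :=
    hρ.inv_tendsto_atTop.zero_smul_isBoundedUnder_le (isBoundedUnder_of ⟨C, hC⟩)
  set T := fun k => f x + C ^ 2 / (2 * ρ k) + ε k
  have hT : Tendsto T atTop (𝓝 (f x)) := by
    simpa using (tendsto_const_nhds.div_atTop (hρ.const_mul_atTop two_pos)).const_add (f x)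
      |>.add hε
  have hupper : ∀ k, augLagrangian f g (ρ k) (w k) (xs (k + 1)) ≤ T k := fun k => by
    have hx := augLagrangian_le_of_nonpos f g (hρpos k) (w k) (sup_eq_right.mp hfeas)
    have hwk : ‖w k‖ ^ 2 / (2 * ρ k) ≤ C ^ 2 / (2 * ρ k) := by
      have hρk := hρpos k
      gcongr
      exact hC k
    calc augLagrangian f g (ρ k) (w k) (xs (k + 1)) ≤ augLagrangian f g (ρ k) (w k) x + ε k :=
          hmin k x
      _ ≤ T k := by linarith
  have hbdd := isBoundedUnder_ge_of_augLagrangian_le (hρpos 0).le (hmin 0) hρ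
    hshift.norm.isBoundedUnder_le hT.isBoundedUnder_le hupper
  have hsub := hφs.tendsto_atTop
  calc f xbar ≤ liminf (fun n => f (xs (φs n + 1))) atTop := hflsc xbar _ hweak
    _ ≤ liminf (fun n => T (φs n)) atTop :=
      liminf_le_liminf
        (.of_forall fun n => (le_augLagrangian f g (hρpos _).le _ _).trans (hupper _))
        (hsub.isBoundedUnder_comp hbdd) (hT.comp hsub).isBoundedUnder_le.isCoboundedUnder_ge
    _ = f x := (hT.comp hsub).liminf_eq

/-- **Theorem 4.2 (b), case `ρₖ → ∞`.** In the augmented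
Lagrangian method with `ρₖ → ∞`, `(wᵏ)` bounded, `εₖ → 0`, and
`L_{ρₖ}(x^{k+1}, wᵏ) ≤ L_{ρₖ}(x, wᵏ) + εₖ` for all `x`: if `x` is feasible
(`g(x)₊ = 0`) and `f` is weakly sequentially lsc, then every weak limit point
`xbar` of `(x^{k+1})` satisfies `f(xbar) ≤ f(x)`. -/
theorem weak_limit_optimal_on_feasible
    {X : Type*} [NormedAddCommGroup X] [NormedSpace ℝ X] [CompleteSpace X]
    {Ω : Type*} [MeasurableSpace Ω] (μ : Measure Ω)
    (f : X → ℝ) (g : X → Lp ℝ 2 μ)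
    (hflsc : ∀ (x : X) (xk : ℕ → X),
      (∀ φ : X →L[ℝ] ℝ, Tendsto (fun k => φ (xk k)) atTop (nhds (φ x))) →
      f x ≤ atTop.liminf (fun k => f (xk k)))
    (ρ : ℕ → ℝ) (hρpos : ∀ k, 0 < ρ k) (hρ : Tendsto ρ atTop atTop)
    (w : ℕ → Lp ℝ 2 μ) (hw : ∃ C : ℝ, ∀ k, ‖w k‖ ≤ C)
    (ε : ℕ → ℝ) (hε : Tendsto ε atTop (nhds 0))
    (xs : ℕ → X)
    (hmin : ∀ k : ℕ, ∀ x : X,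
      f (xs (k + 1)) + (ρ k / 2) * ‖(g (xs (k + 1)) + (ρ k)⁻¹ • w k) ⊔ 0‖ ^ 2 ≤
        f x + (ρ k / 2) * ‖(g x + (ρ k)⁻¹ • w k) ⊔ 0‖ ^ 2 + ε k)
    (x : X) (hfeas : (g x) ⊔ 0 = 0)
    (xbar : X) (φs : ℕ → ℕ) (hφs : StrictMono φs)
    (hweak : ∀ φ : X →L[ℝ] ℝ,
      Tendsto (fun n => φ (xs (φs n + 1))) atTop (nhds (φ xbar))) :
    f xbar ≤ f x :=
  weak_limit_optimal_on_feasible_general μ f g hflsc ρ hρpos hρ w hw ε hε xs hmin x hfeas xbar φs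
    hφs hweak
end

section
/- Let Z be a Hilbert space, K ⊆ Z a nonempty closed convex cone, and P_K the metric projection onto K. Then the function φ(z) = ‖P_K(z)‖² is Fréchet differentiable on Z with φ'(z) = 2 P_K(z). -/
open RealInnerProductSpace

/-!
For a cone `K`, the variational inequality of the projection gives `⟪u - P u, P u⟫ = 0` and
`⟪u - P u, y⟫ ≤ 0` for `y ∈ K`; together these say that `2 P z` is a subgradient of
`φ = ‖P ·‖²` at every `z`. A function admitting a subgradient `g u` at every point `u`, with `g`
continuous at `z`, is differentiable at `z` with gradient `g z`: the subgradient inequalities at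
`z` and at `w` trap the first-order remainder between `0` and `⟪g w - g z, w - z⟫`. Finally `P`
is `1`-Lipschitz, so `g = 2 P` is continuous.
-/

section

variable {E : Type*} [NormedAddCommGroup E] [InnerProductSpace ℝ E]

section Subgradient

variable {f : E → ℝ} {g : E → E}

theorem abs_sub_sub_inner_le_of_le_inner (hsub : ∀ u w, f u + ⟪g u, w - u⟫ ≤ f w) (z w : E) :
    |f w - f z - ⟪g z, w - z⟫| ≤ ‖g w - g z‖ * ‖w - z‖ := by
  have hz := hsub z w
  have hw := hsub w z
  have hswap : ⟪g w, z - w⟫ = -⟪g w, w - z⟫ := by rw [← inner_neg_right, neg_sub]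
  have hdiff : ⟪g w - g z, w - z⟫ = ⟪g w, w - z⟫ - ⟪g z, w - z⟫ := inner_sub_left _ _ _
  have hcs := real_inner_le_norm (g w - g z) (w - z)
  rw [abs_le]
  constructor <;> linarith

theorem hasFDerivAt_of_le_inner_of_continuousAt (hsub : ∀ u w, f u + ⟪g u, w - u⟫ ≤ f w)
    {z : E} (hg : ContinuousAt g z) : HasFDerivAt f (innerSL ℝ (g z)) z := by
  rw [hasFDerivAt_iff_isLittleO_nhds_zero, Asymptotics.isLittleO_iff]
  intro c hc
  have hclose : ∀ᶠ h in nhds (0 : E), ‖g (z + h) - g z‖ ≤ c := by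
    have hg0 : Filter.Tendsto (fun h => g (z + h)) (nhds 0) (nhds (g z)) :=
      hg.tendsto.comp (by simpa using (continuous_const_add z).tendsto 0)
    filter_upwards [hg0 (Metric.closedBall_mem_nhds (g z) hc)] with h hh
    simpa [dist_eq_norm] using hh
  filter_upwards [hclose] with h hh
  calc ‖f (z + h) - f z - innerSL ℝ (g z) h‖
      = |f (z + h) - f z - ⟪g z, z + h - z⟫| := by simp
    _ ≤ ‖g (z + h) - g z‖ * ‖z + h - z‖ := abs_sub_sub_inner_le_of_le_inner hsub z (z + h)
    _ ≤ c * ‖h‖ := by rw [add_sub_cancel_left]; gcongr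

end Subgradient

def IsMetricProjection (K : Set E) (P : E → E) : Prop :=
  ∀ z, P z ∈ K ∧ ∀ y ∈ K, ‖z - P z‖ ≤ ‖z - y‖

namespace IsMetricProjection

variable {K : Set E} {P : E → E}

theorem inner_sub_le_zero (hP : IsMetricProjection K P) (hK : Convex ℝ K) (u : E) {y : E}
    (hy : y ∈ K) : ⟪u - P u, y - P u⟫ ≤ 0 := by
  have : Nonempty K := ⟨⟨P u, (hP u).1⟩⟩
  refine (norm_eq_iInf_iff_real_inner_le_zero hK (hP u).1).1 ?_ y hy
  have hbdd : BddBelow (Set.range fun w : K => ‖u - w‖) := ⟨0, by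
    rintro _ ⟨w, rfl⟩
    exact norm_nonneg _⟩
  exact le_antisymm (le_ciInf fun w => (hP u).2 w w.2) (ciInf_le hbdd ⟨P u, (hP u).1⟩)

theorem lipschitzWith_one (hP : IsMetricProjection K P) (hK : Convex ℝ K) :
    LipschitzWith 1 P := by
  refine LipschitzWith.of_dist_le_mul fun u v => ?_
  rw [NNReal.coe_one, one_mul, dist_eq_norm, dist_eq_norm]
  have hu := hP.inner_sub_le_zero hK u (hP v).1
  have hv := hP.inner_sub_le_zero hK v (hP u).1
  have hsq : ‖P u - P v‖ ^ 2 ≤ ⟪u - v, P u - P v⟫ := by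
    have hsplit : ⟪u - v, P u - P v⟫ - ‖P u - P v‖ ^ 2
        = -⟪u - P u, P v - P u⟫ - ⟪v - P v, P u - P v⟫ := by
      rw [← real_inner_self_eq_norm_sq, ← inner_neg_right, neg_sub, ← inner_sub_left,
        ← inner_sub_left]
      congr 1
      abel
    linarith
  have hcs := real_inner_le_norm (u - v) (P u - P v)
  nlinarith [norm_nonneg (P u - P v), norm_nonneg (u - v)]

variable (hP : IsMetricProjection K P) (hK : Convex ℝ K)
  (hcone : ∀ c : ℝ, 0 ≤ c → ∀ z ∈ K, c • z ∈ K)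
include hP hK hcone

theorem inner_sub_self_eq_zero (u : E) : ⟪u - P u, P u⟫ = 0 := by
  have h0 := hP.inner_sub_le_zero hK u (by simpa using hcone 0 le_rfl _ (hP u).1)
  have h2 := hP.inner_sub_le_zero hK u (hcone 2 zero_le_two _ (hP u).1)
  rw [zero_sub, inner_neg_right] at h0
  rw [two_smul, add_sub_cancel_right] at h2
  linarith

theorem inner_sub_le_zero_of_mem (u : E) {y : E} (hy : y ∈ K) : ⟪u - P u, y⟫ ≤ 0 := by
  have h := hP.inner_sub_le_zero hK u hy
  rw [inner_sub_right, hP.inner_sub_self_eq_zero hK hcone u] at h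
  linarith

theorem sq_norm_add_inner_le (z w : E) : ‖P z‖ ^ 2 + ⟪(2 : ℝ) • P z, w - z⟫ ≤ ‖P w‖ ^ 2 := by
  have hz := hP.inner_sub_self_eq_zero hK hcone z
  have hw := hP.inner_sub_le_zero_of_mem hK hcone w (hP z).1
  have hsq := norm_sub_sq_real (P w) (P z)
  rw [inner_sub_left, real_inner_self_eq_norm_sq] at hz
  rw [inner_sub_left] at hw
  rw [real_inner_smul_left, inner_sub_right, real_inner_comm w (P z), real_inner_comm z (P z)]
  linarith [sq_nonneg ‖P w - P z‖]

end IsMetricProjection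

end

theorem sq_norm_proj_cone_hasFDerivAt_general
    {Z : Type*} [NormedAddCommGroup Z] [InnerProductSpace ℝ Z]
    (K : Set Z) (hKco : Convex ℝ K)
    (hKcone : ∀ c : ℝ, 0 ≤ c → ∀ z ∈ K, c • z ∈ K)
    (P : Z → Z)
    (hP : ∀ z : Z, P z ∈ K ∧ ∀ y ∈ K, ‖z - P z‖ ≤ ‖z - y‖)
    (z : Z) :
    HasFDerivAt (fun u => ‖P u‖ ^ 2) ((2 : ℝ) • (innerSL ℝ (P z))) z := by
  have hP : IsMetricProjection K P := hP
  have hcont : ContinuousAt (fun u => (2 : ℝ) • P u) z :=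
    ((hP.lipschitzWith_one hKco).continuous.const_smul (2 : ℝ)).continuousAt
  have h := hasFDerivAt_of_le_inner_of_continuousAt (hP.sq_norm_add_inner_le hKco hKcone) hcont
  rwa [map_smulₛₗ, RCLike.conj_to_real] at h

/-- Let `Z` be a real Hilbert space, `K ⊆ Z` a nonempty
closed convex cone and `P` the metric projection onto `K`. Then
`φ(z) = ‖P z‖²` is Fréchet differentiable with `φ'(z) = 2 P z`
(identified with the functional `v ↦ 2⟪P z, v⟫`). -/
theorem sq_norm_proj_cone_hasFDerivAt
    {Z : Type*} [NormedAddCommGroup Z] [InnerProductSpace ℝ Z] [CompleteSpace Z]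
    (K : Set Z) (hKne : K.Nonempty) (hKcl : IsClosed K) (hKco : Convex ℝ K)
    (hKcone : ∀ c : ℝ, 0 ≤ c → ∀ z ∈ K, c • z ∈ K)
    (P : Z → Z)
    (hP : ∀ z : Z, P z ∈ K ∧ ∀ y ∈ K, ‖z - P z‖ ≤ ‖z - y‖)
    (z : Z) :
    HasFDerivAt (fun u => ‖P u‖ ^ 2) ((2 : ℝ) • (innerSL ℝ (P z))) z :=
  sq_norm_proj_cone_hasFDerivAt_general K hKco hKcone P hP z
end

section
/- Let X be a reflexive Banach space whose squared norm q(x) = ‖x‖² is continuously differentiable, f : X → ℝ and x ↦ ‖g₊(x)‖_Z weakly sequentially lsc with f, g continuously Fréchet differentiable (g : X → Z = L²(Ω)). Let x̄ be a local minimizer of f over {x : g(x)₊ = 0}, minimizing over the closed ball B_r(x̄). For each k ∈ ℕ, let xᵏ minimize x ↦ f(x) + k‖g₊(x)‖²_Z + ‖x − x̄‖²_X over B_r(x̄). Then some subsequence of (xᵏ) converges strongly to x̄. -/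
/-!
Testing the `k`-th penalized problem at `x̄` gives
`f xᵏ + k ‖g₊ xᵏ‖² + ‖xᵏ - x̄‖² ≤ f x̄`, while comparison with the `0`-th problem bounds `f xᵏ`
from below; hence `‖g₊ xᵏ‖ → 0`. The bounded sequence `(xᵏ)` has a weakly convergent subsequence
because `X` is reflexive; its limit `x̃` stays in the ball and is feasible by weak lower
semicontinuity, so `f x̄ ≤ f x̃ ≤ liminf f xᵏ`, and then `‖xᵏ - x̄‖² ≤ f x̄ - f xᵏ` tends to `0`
along the subsequence.

Weak sequential compactness is obtained by passing to the closed span of the sequence: it is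
separable and reflexive, so its dual is separable, and sequential Banach–Alaoglu applies in its
bidual.
-/

open MeasureTheory Filter Metric Topology NormedSpace TopologicalSpace

section Reflexive

variable {E : Type*} [NormedAddCommGroup E] [NormedSpace ℝ E]

theorem Submodule.exists_strongDual_vanishing_of_notMem (p : Submodule ℝ E)
    (hp : IsClosed (p : Set E)) {x : E} (hx : x ∉ p) :
    ∃ F : StrongDual ℝ E, (∀ z ∈ p, F z = 0) ∧ F x ≠ 0 := by
  have : IsClosed (p : Set E) := hp
  obtain ⟨G, hG⟩ := SeparatingDual.exists_ne_zero (R := ℝ)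
    (show p.mkQL x ≠ 0 by simpa [Submodule.mkQL_apply] using hx)
  exact ⟨G.comp p.mkQL, fun z hz => by simp [(Submodule.Quotient.mk_eq_zero p).2 hz], hG⟩

theorem Submodule.surjective_inclusionInDoubleDual
    (hE : Function.Surjective (inclusionInDoubleDual ℝ E))
    (Y : Submodule ℝ E) (hY : IsClosed (Y : Set E)) :
    Function.Surjective (inclusionInDoubleDual ℝ Y) := by
  intro Λ
  let restrict : StrongDual ℝ E →L[ℝ] StrongDual ℝ Y :=
    (ContinuousLinearMap.compL ℝ Y E ℝ).flip Y.subtypeL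
  obtain ⟨x, hx⟩ := hE (Λ.comp restrict)
  have hxΛ : ∀ φ : StrongDual ℝ E, φ x = Λ (restrict φ) := fun φ =>
    congrArg (fun T => T φ) hx
  have hxY : x ∈ Y := by
    by_contra hxY
    obtain ⟨φ, hφY, hφx⟩ := Y.exists_strongDual_vanishing_of_notMem hY hxY
    have hrestrict : restrict φ = 0 := by ext y; exact hφY y y.2
    exact hφx (by rw [hxΛ, hrestrict, map_zero])
  refine ⟨⟨x, hxY⟩, ContinuousLinearMap.ext fun ψ => ?_⟩
  obtain ⟨φ, hφ, -⟩ := exists_extension_norm_eq Y ψ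
  have hrestrict : restrict φ = ψ := ContinuousLinearMap.ext hφ
  rw [← hrestrict]
  exact hxΛ φ

theorem separableSpace_of_separableSpace_strongDual [SeparableSpace (StrongDual ℝ E)] :
    SeparableSpace E := by
  set ψ := denseSeq (StrongDual ℝ E)
  have hnorming : ∀ n, ∃ w : E, ‖w‖ ≤ 1 ∧ ‖ψ n‖ / 2 ≤ ‖ψ n w‖ := by
    intro n
    rcases (norm_nonneg (ψ n)).eq_or_lt with h | h
    · exact ⟨0, by simp, by simp [← h]⟩
    · obtain ⟨w, hw, hψw⟩ := (ψ n).exists_lt_apply_of_lt_opNorm (half_lt_self h)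
      exact ⟨w, hw.le, hψw.le⟩
  choose w hw1 hψw using hnorming
  set M := (Submodule.span ℝ (Set.range w)).topologicalClosure
  have hM : IsSeparable (M : Set E) := by
    rw [Submodule.topologicalClosure_coe]
    exact ((Set.countable_range w).isSeparable.span (R := ℝ)).closure
  suffices hMtop : ∀ x, x ∈ M by
    rw [← isSeparable_univ_iff]
    exact hM.mono fun x _ => hMtop x
  intro x
  by_contra hx
  obtain ⟨F, hFM, hFx⟩ :=
    M.exists_strongDual_vanishing_of_notMem (Submodule.isClosed_topologicalClosure _) hx
  -- `F` kills each near-norming vector `w n`, so it is far from each `ψ n`, hence from `F` itself.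
  have hfar : ∀ n, ‖F‖ ≤ 3 * ‖F - ψ n‖ := by
    intro n
    have hwM : w n ∈ M := Submodule.le_topologicalClosure _ (Submodule.subset_span ⟨n, rfl⟩)
    have h1 : ‖ψ n‖ / 2 ≤ ‖F - ψ n‖ :=
      calc ‖ψ n‖ / 2 ≤ ‖ψ n (w n)‖ := hψw n
        _ = ‖(F - ψ n) (w n)‖ := by simp [hFM _ hwM]
        _ ≤ ‖F - ψ n‖ * ‖w n‖ := (F - ψ n).le_opNorm _
        _ ≤ ‖F - ψ n‖ := mul_le_of_le_one_right (norm_nonneg _) (hw1 n)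
    have h2 := norm_le_norm_add_norm_sub' F (ψ n)
    linarith
  have hF0 : ‖F‖ ≤ 3 * ‖F - F‖ :=
    (denseRange_denseSeq (StrongDual ℝ E)).induction_on (p := fun G => ‖F‖ ≤ 3 * ‖F - G‖) F
      (isClosed_le continuous_const (by fun_prop)) hfar
  rw [sub_self, norm_zero, mul_zero, norm_le_zero_iff] at hF0
  exact hFx (by simp [hF0])

theorem exists_subseq_forall_strongDual_tendsto_of_separableSpace [SeparableSpace E]
    (hE : Function.Surjective (inclusionInDoubleDual ℝ E))
    {y : ℕ → E} {C : ℝ} (hC : ∀ k, ‖y k‖ ≤ C) :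
    ∃ (x : E) (σ : ℕ → ℕ), StrictMono σ ∧
      ∀ φ : StrongDual ℝ E, Tendsto (fun k => φ (y (σ k))) atTop (𝓝 (φ x)) := by
  have : SeparableSpace (StrongDual ℝ (StrongDual ℝ E)) :=
    hE.denseRange.separableSpace (inclusionInDoubleDual ℝ E).continuous
  have : SeparableSpace (StrongDual ℝ E) :=
    separableSpace_of_separableSpace_strongDual (E := StrongDual ℝ E)
  let Λ : ℕ → WeakDual ℝ (StrongDual ℝ E) := fun k =>
    StrongDual.toWeakDual (inclusionInDoubleDual ℝ E (y k))
  have hΛ : ∀ k, Λ k ∈ WeakDual.toStrongDual ⁻¹' closedBall 0 C := fun k => by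
    rw [Set.mem_preimage, mem_closedBall]
    exact (dist_zero_right (E := StrongDual ℝ (StrongDual ℝ E)) _).trans_le
      ((double_dual_bound ℝ E (y k)).trans (hC k))
  obtain ⟨Λ₀, -, σ, hσ, hΛσ⟩ := WeakDual.isSeqCompact_closedBall ℝ _ 0 C hΛ
  obtain ⟨x, hx⟩ := hE (WeakDual.toStrongDual Λ₀)
  obtain rfl : Λ₀ = StrongDual.toWeakDual (inclusionInDoubleDual ℝ E x) := by rw [hx]; rfl
  exact ⟨x, σ, hσ, tendsto_iff_forall_eval_tendsto_topDualPairing.1 hΛσ⟩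

theorem exists_subseq_forall_strongDual_tendsto
    (hE : Function.Surjective (inclusionInDoubleDual ℝ E))
    {y : ℕ → E} {C : ℝ} (hC : ∀ k, ‖y k‖ ≤ C) :
    ∃ (x : E) (σ : ℕ → ℕ), StrictMono σ ∧
      ∀ φ : StrongDual ℝ E, Tendsto (fun k => φ (y (σ k))) atTop (𝓝 (φ x)) := by
  set Y := (Submodule.span ℝ (Set.range y)).topologicalClosure
  have hyY : ∀ k, y k ∈ Y := fun k =>
    Submodule.le_topologicalClosure _ (Submodule.subset_span ⟨k, rfl⟩)
  have : SeparableSpace Y := by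
    refine IsSeparable.separableSpace ?_
    rw [Submodule.topologicalClosure_coe]
    exact ((Set.countable_range y).isSeparable.span (R := ℝ)).closure
  obtain ⟨x, σ, hσ, hx⟩ := exists_subseq_forall_strongDual_tendsto_of_separableSpace
    (Y.surjective_inclusionInDoubleDual hE (Submodule.isClosed_topologicalClosure _))
    (y := fun k => ⟨y k, hyY k⟩) hC
  exact ⟨x, σ, hσ, fun φ => hx (φ.comp Y.subtypeL)⟩

theorem norm_le_of_forall_strongDual_tendsto {y : ℕ → E} {x : E} {C : ℝ} (hC0 : 0 ≤ C)
    (hC : ∀ k, ‖y k‖ ≤ C)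
    (hy : ∀ φ : StrongDual ℝ E, Tendsto (fun k => φ (y k)) atTop (𝓝 (φ x))) : ‖x‖ ≤ C := by
  refine norm_le_dual_bound ℝ x hC0 fun φ => le_of_tendsto (hy φ).norm ?_
  filter_upwards with k
  calc ‖φ (y k)‖ ≤ ‖φ‖ * ‖y k‖ := φ.le_opNorm _
    _ ≤ C * ‖φ‖ := by rw [mul_comm]; gcongr; exact hC k

end Reflexive

theorem tendsto_nhds_zero_of_natCast_mul_le {a : ℕ → ℝ} {B : ℝ} (ha : ∀ k, 0 ≤ a k)
    (hB : ∀ k : ℕ, k * a k ≤ B) : Tendsto a atTop (𝓝 0) := by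
  refine squeeze_zero' (.of_forall ha) ?_ (tendsto_const_div_atTop_nhds_zero_nat B)
  filter_upwards [eventually_gt_atTop 0] with k hk
  rw [le_div_iff₀ (by exact_mod_cast hk), mul_comm]
  exact hB k

theorem tendsto_nhds_zero_of_le_sub_of_le_liminf {u v : ℕ → ℝ} {c : ℝ}
    (hu : IsBoundedUnder (· ≥ ·) atTop u) (hc : c ≤ liminf u atTop)
    (hv0 : ∀ k, 0 ≤ v k) (hv : ∀ k, v k ≤ c - u k) : Tendsto v atTop (𝓝 0) := by
  refine tendsto_order.2 ⟨fun a ha => .of_forall fun k => ha.trans_le (hv0 k), fun ε hε => ?_⟩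
  filter_upwards [eventually_lt_of_lt_liminf (by linarith : c - ε < liminf u atTop) hu]
    with k hk
  linarith [hv k]

theorem tendsto_nhds_zero_of_sq_tendsto {a : ℕ → ℝ} (ha : ∀ k, 0 ≤ a k)
    (h : Tendsto (fun k => a k ^ 2) atTop (𝓝 0)) : Tendsto a atTop (𝓝 0) := by
  simpa [Real.sqrt_sq (ha _)] using h.sqrt

section Penalization

variable {E : Type*} {f p d : E → ℝ} {K : Set E} {xs : ℕ → E}

/-- The `k`-th penalized functional: objective `f`, constraint violation `p`, proximal term `d`. -/
def penalized (f p d : E → ℝ) (k : ℕ) (x : E) : ℝ := f x + k * p x ^ 2 + d x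

theorem penalized_le_of_isMinOn {k : ℕ} (hmin : IsMinOn (penalized f p d k) K (xs k))
    {x : E} (hx : x ∈ K) (hpx : p x = 0) (hdx : d x = 0) :
    f (xs k) + k * p (xs k) ^ 2 + d (xs k) ≤ f x := by
  simpa [penalized, hpx, hdx] using isMinOn_iff.1 hmin x hx

theorem le_apply_of_isMinOn_zero {M : ℝ} (hmin : IsMinOn (penalized f p d 0) K (xs 0))
    (hxs : ∀ k, xs k ∈ K) (hdM : ∀ x ∈ K, d x ≤ M) (k : ℕ) :
    f (xs 0) + d (xs 0) - M ≤ f (xs k) := by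
  have h := isMinOn_iff.1 hmin (xs k) (hxs k)
  simp only [penalized, CharP.cast_eq_zero, zero_mul, add_zero] at h
  linarith [hdM _ (hxs k)]

variable {M : ℝ} {xbar : E}

theorem tendsto_penalty_nhds_zero (hmin : ∀ k : ℕ, IsMinOn (penalized f p d k) K (xs k))
    (hxs : ∀ k, xs k ∈ K) (hd0 : ∀ x ∈ K, 0 ≤ d x) (hdM : ∀ x ∈ K, d x ≤ M)
    (hbar : xbar ∈ K) (hpbar : p xbar = 0) (hdbar : d xbar = 0) (hp : ∀ x, 0 ≤ p x) :
    Tendsto (fun k => p (xs k)) atTop (𝓝 0) := by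
  refine tendsto_nhds_zero_of_sq_tendsto (fun k => hp _) <|
    tendsto_nhds_zero_of_natCast_mul_le (B := f xbar - (f (xs 0) + d (xs 0) - M))
      (fun k => sq_nonneg _) fun k => ?_
  have h1 := penalized_le_of_isMinOn (hmin k) hbar hpbar hdbar
  have h2 := le_apply_of_isMinOn_zero (hmin 0) hxs hdM k
  linarith [hd0 _ (hxs k)]

theorem tendsto_proximal_nhds_zero_of_le_liminf
    (hmin : ∀ k : ℕ, IsMinOn (penalized f p d k) K (xs k))
    (hxs : ∀ k, xs k ∈ K) (hd0 : ∀ x ∈ K, 0 ≤ d x) (hdM : ∀ x ∈ K, d x ≤ M)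
    (hbar : xbar ∈ K) (hpbar : p xbar = 0) (hdbar : d xbar = 0) {σ : ℕ → ℕ}
    (hlim : f xbar ≤ liminf (fun k => f (xs (σ k))) atTop) :
    Tendsto (fun k => d (xs (σ k))) atTop (𝓝 0) := by
  refine tendsto_nhds_zero_of_le_sub_of_le_liminf
    (isBoundedUnder_of ⟨_, fun k => le_apply_of_isMinOn_zero (hmin 0) hxs hdM (σ k)⟩) hlim
    (fun k => hd0 _ (hxs _)) fun k => ?_
  have h := penalized_le_of_isMinOn (hmin (σ k)) hbar hpbar hdbar
  nlinarith [sq_nonneg (p (xs (σ k))), (Nat.cast_nonneg (σ k) : (0 : ℝ) ≤ σ k)]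

end Penalization

theorem penalized_minimizers_subseq_tendsto_general
    {X : Type*} [NormedAddCommGroup X] [NormedSpace ℝ X]
    (hrefl : Function.Surjective (NormedSpace.inclusionInDoubleDual ℝ X))
    {Ω : Type*} [MeasurableSpace Ω] (μ : Measure Ω)
    (f : X → ℝ) (g : X → Lp ℝ 2 μ)
    (hflsc : ∀ (x : X) (xk : ℕ → X),
      (∀ φ : X →L[ℝ] ℝ, Tendsto (fun k => φ (xk k)) atTop (nhds (φ x))) →
      f x ≤ atTop.liminf (fun k => f (xk k)))
    (hglsc : ∀ (x : X) (xk : ℕ → X),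
      (∀ φ : X →L[ℝ] ℝ, Tendsto (fun k => φ (xk k)) atTop (nhds (φ x))) →
      ‖(g x) ⊔ 0‖ ≤ atTop.liminf (fun k => ‖(g (xk k)) ⊔ 0‖))
    (xbar : X) (r : ℝ) (hr : 0 < r)
    (hfeas : (g xbar) ⊔ 0 = 0)
    (hlocmin : ∀ x ∈ closedBall xbar r, (g x) ⊔ 0 = 0 → f xbar ≤ f x)
    (xs : ℕ → X)
    (hxs : ∀ k : ℕ, xs k ∈ closedBall xbar r ∧
      ∀ x ∈ closedBall xbar r,
        f (xs k) + (k : ℝ) * ‖(g (xs k)) ⊔ 0‖ ^ 2 + ‖xs k - xbar‖ ^ 2 ≤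
          f x + (k : ℝ) * ‖(g x) ⊔ 0‖ ^ 2 + ‖x - xbar‖ ^ 2) :
    ∃ φs : ℕ → ℕ, StrictMono φs ∧
      Tendsto (fun n => xs (φs n)) atTop (nhds xbar) := by
  have hmin (k : ℕ) : IsMinOn (penalized f (fun x => ‖g x ⊔ 0‖) (fun x => ‖x - xbar‖ ^ 2) k)
      (closedBall xbar r) (xs k) := isMinOn_iff.2 (hxs k).2
  have hxsK (k : ℕ) : xs k ∈ closedBall xbar r := (hxs k).1
  have hd0 (x : X) (_ : x ∈ closedBall xbar r) : 0 ≤ ‖x - xbar‖ ^ 2 := sq_nonneg _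
  have hdM (x : X) (hx : x ∈ closedBall xbar r) : ‖x - xbar‖ ^ 2 ≤ r ^ 2 :=
    pow_le_pow_left₀ (norm_nonneg _) (mem_closedBall_iff_norm.1 hx) 2
  have hbar : xbar ∈ closedBall xbar r := mem_closedBall_self hr.le
  have hpbar : ‖g xbar ⊔ 0‖ = 0 := by simp [hfeas]
  have hdbar : ‖xbar - xbar‖ ^ 2 = 0 := by simp
  obtain ⟨x, σ, hσ, hweak⟩ :=
    exists_subseq_forall_strongDual_tendsto hrefl fun k => norm_le_of_mem_closedBall (hxsK k)
  have hxK : x ∈ closedBall xbar r := mem_closedBall_iff_norm.2 <|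
    norm_le_of_forall_strongDual_tendsto hr.le (fun k => mem_closedBall_iff_norm.1 (hxsK (σ k)))
      fun φ => by simpa only [map_sub] using (hweak φ).sub_const (φ xbar)
  have hpenalty := (tendsto_penalty_nhds_zero hmin hxsK hd0 hdM hbar hpbar hdbar
    fun _ => norm_nonneg _).comp hσ.tendsto_atTop
  have hxfeas : g x ⊔ 0 = 0 := norm_le_zero_iff.1 <|
    (hglsc x _ hweak).trans_eq hpenalty.liminf_eq
  have hlim := (hlocmin x hxK hxfeas).trans (hflsc x _ hweak)
  have hdist := tendsto_proximal_nhds_zero_of_le_liminf hmin hxsK hd0 hdM hbar hpbar hdbar hlim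
  exact ⟨σ, hσ, tendsto_iff_norm_sub_tendsto_zero.2 <|
    tendsto_nhds_zero_of_sq_tendsto (fun _ => norm_nonneg _) hdist⟩

/-- **penalization step in Theorem 5.3.** Let `X` be a
reflexive Banach space whose squared norm is `C¹`, `f : X → ℝ` and
`x ↦ ‖g₊(x)‖` weakly sequentially lsc with `f` and `g : X → L²(Ω)` continuously
Fréchet differentiable. Let `xbar` be a local minimizer of `f` over the
feasible set `{x : g(x)₊ = 0}` within the closed ball `B_r(xbar)`, and for each
`k` let `xᵏ` minimize `f(x) + k‖g₊(x)‖² + ‖x - xbar‖²` over `B_r(xbar)`.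
Then some subsequence of `(xᵏ)` converges strongly to `xbar`. -/
theorem penalized_minimizers_subseq_tendsto
    {X : Type*} [NormedAddCommGroup X] [NormedSpace ℝ X] [CompleteSpace X]
    (hrefl : Function.Surjective (NormedSpace.inclusionInDoubleDual ℝ X))
    (hq : ContDiff ℝ 1 (fun x : X => ‖x‖ ^ 2))
    {Ω : Type*} [MeasurableSpace Ω] (μ : Measure Ω)
    (f : X → ℝ) (g : X → Lp ℝ 2 μ)
    (hf : ContDiff ℝ 1 f) (hg : ContDiff ℝ 1 g)
    (hflsc : ∀ (x : X) (xk : ℕ → X),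
      (∀ φ : X →L[ℝ] ℝ, Tendsto (fun k => φ (xk k)) atTop (nhds (φ x))) →
      f x ≤ atTop.liminf (fun k => f (xk k)))
    (hglsc : ∀ (x : X) (xk : ℕ → X),
      (∀ φ : X →L[ℝ] ℝ, Tendsto (fun k => φ (xk k)) atTop (nhds (φ x))) →
      ‖(g x) ⊔ 0‖ ≤ atTop.liminf (fun k => ‖(g (xk k)) ⊔ 0‖))
    (xbar : X) (r : ℝ) (hr : 0 < r)
    (hfeas : (g xbar) ⊔ 0 = 0)
    (hlocmin : ∀ x ∈ closedBall xbar r, (g x) ⊔ 0 = 0 → f xbar ≤ f x)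
    (xs : ℕ → X)
    (hxs : ∀ k : ℕ, xs k ∈ closedBall xbar r ∧
      ∀ x ∈ closedBall xbar r,
        f (xs k) + (k : ℝ) * ‖(g (xs k)) ⊔ 0‖ ^ 2 + ‖xs k - xbar‖ ^ 2 ≤
          f x + (k : ℝ) * ‖(g x) ⊔ 0‖ ^ 2 + ‖x - xbar‖ ^ 2) :
    ∃ φs : ℕ → ℕ, StrictMono φs ∧
      Tendsto (fun n => xs (φs n)) atTop (nhds xbar) :=
  penalized_minimizers_subseq_tendsto_general hrefl μ f g hflsc hglsc xbar r hr hfeas hlocmin xs hxs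
end

section
/- Let X be a Banach space, Z = L²(Ω), f : X → ℝ and g : X → Z continuously Fréchet differentiable. Let (x^{k+1}) be generated with multipliers λ^{k+1} = (wᵏ + ρₖ g(x^{k+1}))₊, where (wᵏ) is bounded in Z and ρₖ → ∞. Suppose f'(x^{k+1}) + g'(x^{k+1})* λ^{k+1} → 0 in X* and x^{k+1} → x̄ strongly along a subsequence. Then g'(x̄)* g₊(x̄) = 0, i.e., x̄ is a stationary point of the constraint violation x ↦ ‖g₊(x)‖²_Z. -/
/-!
Divide the stationarity residual by `ρₖ`. Since the positive part is positively homogeneous,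
`ρₖ⁻¹ (wᵏ + ρₖ g(x^{k+1}))₊ = (ρₖ⁻¹ wᵏ + g(x^{k+1}))₊`, so the scaled residual is
`ρₖ⁻¹ f'(x^{k+1}) + g'(x^{k+1})* (ρₖ⁻¹ wᵏ + g(x^{k+1}))₊`. Along the subsequence this tends to
`g'(x̄)* g₊(x̄)`, because `ρₖ⁻¹ → 0` kills the bounded terms `f'(x^{k+1})` and `wᵏ`; on the
other hand it tends to `0`, the residual itself tending to `0`.
-/

open MeasureTheory Filter Topology
open scoped ENNReal

namespace MeasureTheory.Lp

variable {Ω : Type*} [MeasurableSpace Ω] {μ : Measure Ω} {p : ℝ≥0∞}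

theorem smul_sup_of_nonneg {c : ℝ} (hc : 0 ≤ c) (a b : Lp ℝ p μ) :
    c • (a ⊔ b) = c • a ⊔ c • b := by
  apply Lp.ext
  filter_upwards [Lp.coeFn_smul c (a ⊔ b), Lp.coeFn_sup a b, Lp.coeFn_smul c a,
    Lp.coeFn_smul c b, Lp.coeFn_sup (c • a) (c • b)] with ω hsmul hsup hsmul_a hsmul_b hsup_smul
  simp only [hsmul, hsup_smul, Pi.smul_apply, Pi.sup_apply, hsup, hsmul_a, hsmul_b]
  exact smul_max_of_nonneg hc _ _

theorem inv_smul_add_smul_sup_zero {c : ℝ} (hc : 0 < c) (w z : Lp ℝ p μ) :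
    c⁻¹ • ((w + c • z) ⊔ 0) = (c⁻¹ • w + z) ⊔ 0 := by
  rw [smul_sup_of_nonneg (inv_nonneg.2 hc.le), smul_zero, smul_add, inv_smul_smul₀ hc.ne']

end MeasureTheory.Lp

section Residual

variable {X : Type*} [NormedAddCommGroup X] [NormedSpace ℝ X]
  {Ω : Type*} [MeasurableSpace Ω] {μ : Measure Ω}

theorem inv_smul_add_innerSL_sup_zero_comp {c : ℝ} (hc : 0 < c) (A : X →L[ℝ] ℝ)
    (B : X →L[ℝ] Lp ℝ 2 μ) (w z : Lp ℝ 2 μ) :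
    c⁻¹ • (A + (innerSL ℝ ((w + c • z) ⊔ 0)).comp B) =
      c⁻¹ • A + (innerSL ℝ ((c⁻¹ • w + z) ⊔ 0)).comp B := by
  rw [smul_add, ← Lp.inv_smul_add_smul_sup_zero hc, map_smulₛₗ, ContinuousLinearMap.smul_comp]
  rfl

theorem innerSL_sup_zero_comp_eq_zero_of_tendsto_residual {ι : Type*} {l : Filter ι} [l.NeBot]
    {f' : X → X →L[ℝ] ℝ} {g : X → Lp ℝ 2 μ} {g' : X → X →L[ℝ] Lp ℝ 2 μ} {xbar : X}
    (hf' : ContinuousAt f' xbar) (hg : ContinuousAt g xbar) (hg' : ContinuousAt g' xbar)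
    {ρ : ι → ℝ} (hρ : Tendsto ρ l atTop) {w : ι → Lp ℝ 2 μ}
    (hw : IsBoundedUnder (· ≤ ·) l fun i => ‖w i‖) {y : ι → X} (hy : Tendsto y l (𝓝 xbar))
    (hres : Tendsto (fun i => f' (y i) + (innerSL ℝ ((w i + ρ i • g (y i)) ⊔ 0)).comp (g' (y i)))
      l (𝓝 0)) :
    (innerSL ℝ (g xbar ⊔ 0)).comp (g' xbar) = 0 := by
  have hρinv : Tendsto (fun i => (ρ i)⁻¹) l (𝓝 0) := hρ.inv_tendsto_atTop
  have hscaled_zero := hρinv.smul hres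
  rw [zero_smul] at hscaled_zero
  have hf'_scaled : Tendsto (fun i => (ρ i)⁻¹ • f' (y i)) l (𝓝 0) := by
    simpa using hρinv.smul (hf'.tendsto.comp hy)
  have hw_scaled : Tendsto (fun i => (ρ i)⁻¹ • w i) l (𝓝 0) :=
    hρinv.zero_smul_isBoundedUnder_le hw
  have hmult : Tendsto (fun i => ((ρ i)⁻¹ • w i + g (y i)) ⊔ 0) l (𝓝 (g xbar ⊔ 0)) := by
    simpa using (hw_scaled.add (hg.tendsto.comp hy)).sup_nhds tendsto_const_nhds
  have hcomp : Tendsto (fun i => (innerSL ℝ (((ρ i)⁻¹ • w i + g (y i)) ⊔ 0)).comp (g' (y i))) l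
      (𝓝 ((innerSL ℝ (g xbar ⊔ 0)).comp (g' xbar))) :=
    (isBoundedBilinearMap_comp.continuous.tendsto _).comp
      (((innerSL ℝ).continuous.tendsto _ |>.comp hmult).prodMk_nhds (hg'.tendsto.comp hy))
  have hscaled_limit := hf'_scaled.add hcomp
  rw [zero_add] at hscaled_limit
  refine tendsto_nhds_unique (hscaled_limit.congr' ?_) hscaled_zero
  filter_upwards [hρ.eventually_gt_atTop 0] with i hρi
  exact (inv_smul_add_innerSL_sup_zero_comp hρi _ _ _ _).symm

end Residual

theorem limit_stationary_for_constraint_violation_general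
    {X : Type*} [NormedAddCommGroup X] [NormedSpace ℝ X]
    {Ω : Type*} [MeasurableSpace Ω] (μ : Measure Ω)
    (g : X → Lp ℝ 2 μ)
    (f' : X → (X →L[ℝ] ℝ)) (g' : X → (X →L[ℝ] Lp ℝ 2 μ))
    (hf'c : Continuous f')
    (hg : ∀ x, HasFDerivAt g (g' x) x) (hg'c : Continuous g')
    (ρ : ℕ → ℝ) (hρ : Tendsto ρ atTop atTop)
    (w : ℕ → Lp ℝ 2 μ) (hw : ∃ C : ℝ, ∀ k, ‖w k‖ ≤ C)
    (xs : ℕ → X)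
    (hres : Tendsto
      (fun k => f' (xs (k + 1)) +
        (innerSL ℝ ((w k + ρ k • g (xs (k + 1))) ⊔ 0)).comp (g' (xs (k + 1))))
      atTop (nhds 0))
    (xbar : X) (φs : ℕ → ℕ) (hφs : StrictMono φs)
    (hconv : Tendsto (fun n => xs (φs n + 1)) atTop (nhds xbar)) :
    (innerSL ℝ ((g xbar) ⊔ 0)).comp (g' xbar) = 0 := by
  obtain ⟨C, hC⟩ := hw
  exact innerSL_sup_zero_comp_eq_zero_of_tendsto_residual hf'c.continuousAt
    (hg xbar).continuousAt hg'c.continuousAt (hρ.comp hφs.tendsto_atTop)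
    (isBoundedUnder_of ⟨C, fun n => hC (φs n)⟩) hconv (hres.comp hφs.tendsto_atTop)

/-- **Theorem 6.2, case `ρₖ → ∞`.** Let `f : X → ℝ`,
`g : X → Z = L²(Ω)` be continuously Fréchet differentiable, and let the
multipliers be `λ^{k+1} = (wᵏ + ρₖ g(x^{k+1}))₊` with `(wᵏ)` bounded and
`ρₖ → ∞`. If the stationarity residuals
`f'(x^{k+1}) + g'(x^{k+1})* λ^{k+1}` tend to `0` in `X*` and
`x^{k+1} → xbar` strongly along a subsequence, then
`g'(xbar)* g₊(xbar) = 0`, i.e. `xbar` is stationary for `x ↦ ‖g₊(x)‖²`. -/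
theorem limit_stationary_for_constraint_violation
    {X : Type*} [NormedAddCommGroup X] [NormedSpace ℝ X] [CompleteSpace X]
    {Ω : Type*} [MeasurableSpace Ω] (μ : Measure Ω)
    (f : X → ℝ) (g : X → Lp ℝ 2 μ)
    (f' : X → (X →L[ℝ] ℝ)) (g' : X → (X →L[ℝ] Lp ℝ 2 μ))
    (hf : ∀ x, HasFDerivAt f (f' x) x) (hf'c : Continuous f')
    (hg : ∀ x, HasFDerivAt g (g' x) x) (hg'c : Continuous g')
    (ρ : ℕ → ℝ) (hρpos : ∀ k, 0 < ρ k) (hρ : Tendsto ρ atTop atTop)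
    (w : ℕ → Lp ℝ 2 μ) (hw : ∃ C : ℝ, ∀ k, ‖w k‖ ≤ C)
    (xs : ℕ → X)
    (hres : Tendsto
      (fun k => f' (xs (k + 1)) +
        (innerSL ℝ ((w k + ρ k • g (xs (k + 1))) ⊔ 0)).comp (g' (xs (k + 1))))
      atTop (nhds 0))
    (xbar : X) (φs : ℕ → ℕ) (hφs : StrictMono φs)
    (hconv : Tendsto (fun n => xs (φs n + 1)) atTop (nhds xbar)) :
    (innerSL ℝ ((g xbar) ⊔ 0)).comp (g' xbar) = 0 :=
  limit_stationary_for_constraint_violation_general μ g f' g' hf'c hg hg'c ρ hρ w hw xs hres xbar φs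
    hφs hconv
end

section
/- Let Ω be a measure space, let g : X → L²(Ω) be continuous from a metric space X, let (wᵏ) ⊆ L²(Ω) be bounded with wᵏ ≥ 0, ρₖ → ∞, and x^{k+1} → x̄ with g(x̄) ≤ 0 a.e. Assume (after passing to a subsequence) g(x^{k+1}) → g(x̄) pointwise a.e. with an L²-dominating function and wᵏ → w̄ pointwise a.e. Then ⟨(wᵏ + ρₖ g(x^{k+1}))₊, g(x^{k+1})₋⟩ → 0, where z₋ = max{−z, 0}. -/
open MeasureTheory Filter
open scoped InnerProductSpace

/-!
Pointwise, `(a + r b)₊ (-b)₊ ≤ a² / (4r)` for `r > 0` (AM-GM on `s(a - s)` with `s = -r b`).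
Integrating gives `⟪(wᵏ + ρₖ gₖ)₊, (gₖ)₋⟫ ≤ ‖wᵏ‖² / (4ρₖ)`, which tends to `0` because the
multipliers are bounded and `ρₖ → ∞`; the inner product is nonnegative, so it tends to `0`.
-/

theorem max_add_mul_mul_max_neg_le {a b r : ℝ} (hr : 0 < r) :
    max (a + r * b) 0 * max (-b) 0 ≤ a ^ 2 / (4 * r) := by
  have hbound : 0 ≤ a ^ 2 / (4 * r) := by positivity
  rcases le_or_gt 0 b with hb | hb
  · simpa [max_eq_right (neg_nonpos.mpr hb)] using hbound
  rcases le_or_gt (a + r * b) 0 with hab | hab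
  · simpa [max_eq_right hab] using hbound
  rw [max_eq_left hab.le, max_eq_left (neg_nonneg.mpr hb.le), le_div_iff₀ (by positivity)]
  nlinarith [sq_nonneg (a + 2 * r * b)]

namespace MeasureTheory.L2

variable {Ω : Type*} [MeasurableSpace Ω] {μ : Measure Ω}

theorem real_inner_eq_integral_mul (f g : Lp ℝ 2 μ) : ⟪f, g⟫_ℝ = ∫ t, f t * g t ∂μ := by
  simp only [inner_def, RCLike.inner_apply, conj_trivial, mul_comm]

theorem real_inner_nonneg {f g : Lp ℝ 2 μ} (hf : 0 ≤ f) (hg : 0 ≤ g) : 0 ≤ ⟪f, g⟫_ℝ := by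
  rw [real_inner_eq_integral_mul]
  refine integral_nonneg_of_ae ?_
  filter_upwards [(Lp.coeFn_nonneg f).mpr hf, (Lp.coeFn_nonneg g).mpr hg] with t hft hgt
  exact mul_nonneg hft hgt

theorem real_inner_add_smul_sup_zero_le (u v : Lp ℝ 2 μ) {r : ℝ} (hr : 0 < r) :
    ⟪(u + r • v) ⊔ 0, -v ⊔ 0⟫_ℝ ≤ ‖u‖ ^ 2 / (4 * r) := by
  have hnorm : ‖u‖ ^ 2 = ∫ t, u t ^ 2 ∂μ := by
    rw [← real_inner_self_eq_norm_sq, real_inner_eq_integral_mul]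
    simp only [sq]
  rw [real_inner_eq_integral_mul, hnorm, ← integral_div]
  refine integral_mono_of_nonneg ?_ ((Lp.memLp u).integrable_sq.div_const _) ?_
  · filter_upwards [(Lp.coeFn_nonneg _).mpr (le_sup_right : 0 ≤ (u + r • v) ⊔ 0),
      (Lp.coeFn_nonneg _).mpr (le_sup_right : 0 ≤ -v ⊔ 0)] with t h₁ h₂
    exact mul_nonneg h₁ h₂
  · filter_upwards [Lp.coeFn_sup (u + r • v) 0, Lp.coeFn_sup (-v) 0, Lp.coeFn_add u (r • v),
      Lp.coeFn_smul r v, Lp.coeFn_neg v, Lp.coeFn_zero ℝ 2 μ] with t h₁ h₂ h₃ h₄ h₅ h₆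
    simp only [h₁, h₂, h₃, h₄, h₅, h₆, Pi.sup_apply, Pi.add_apply, Pi.smul_apply, Pi.neg_apply,
      Pi.zero_apply, smul_eq_mul]
    exact max_add_mul_mul_max_neg_le hr

end MeasureTheory.L2

theorem asymptotic_complementarity_general
    {X : Type*}
    {Ω : Type*} [MeasurableSpace Ω] (μ : Measure Ω)
    (g : X → Lp ℝ 2 μ)
    (w : ℕ → Lp ℝ 2 μ) (hwbd : ∃ C : ℝ, ∀ k, ‖w k‖ ≤ C)
    (ρ : ℕ → ℝ) (hρ : Tendsto ρ atTop atTop)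
    (xs : ℕ → X) :
    Tendsto
      (fun k => (inner ℝ ((w k + ρ k • g (xs (k + 1))) ⊔ 0)
        ((-(g (xs (k + 1)))) ⊔ 0) : ℝ)) atTop (nhds 0) := by
  obtain ⟨C, hC⟩ := hwbd
  have hupper : ∀ᶠ k in atTop, (inner ℝ ((w k + ρ k • g (xs (k + 1))) ⊔ 0)
      ((-(g (xs (k + 1)))) ⊔ 0) : ℝ) ≤ C ^ 2 / (4 * ρ k) := by
    filter_upwards [hρ.eventually_gt_atTop 0] with k hρk
    refine (L2.real_inner_add_smul_sup_zero_le _ _ hρk).trans ?_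
    gcongr
    exact hC k
  refine squeeze_zero' (Eventually.of_forall fun k => ?_) hupper ?_
  · exact L2.real_inner_nonneg le_sup_right le_sup_right
  · exact tendsto_const_nhds.div_atTop (hρ.const_mul_atTop four_pos)

/-- **asymptotic complementarity, Theorem 6.3.** Let
`g : X → L²(Ω)` be continuous from a metric space `X`, `(wᵏ) ⊆ L²(Ω)` bounded
and nonnegative, `ρₖ → ∞`, `x^{k+1} → xbar` with `g(xbar) ≤ 0` a.e.
Assume `g(x^{k+1}) → g(xbar)` pointwise a.e. with an `L²`-dominating function
and `wᵏ → w̄` pointwise a.e. Then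
`⟪(wᵏ + ρₖ g(x^{k+1}))₊, g(x^{k+1})₋⟫ → 0`. -/
theorem asymptotic_complementarity
    {X : Type*} [MetricSpace X]
    {Ω : Type*} [MeasurableSpace Ω] (μ : Measure Ω)
    (g : X → Lp ℝ 2 μ) (hg : Continuous g)
    (w : ℕ → Lp ℝ 2 μ) (hwbd : ∃ C : ℝ, ∀ k, ‖w k‖ ≤ C)
    (hwpos : ∀ k, (0 : Lp ℝ 2 μ) ≤ w k)
    (ρ : ℕ → ℝ) (hρpos : ∀ k, 0 < ρ k) (hρ : Tendsto ρ atTop atTop)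
    (xs : ℕ → X) (xbar : X) (hconv : Tendsto (fun k => xs (k + 1)) atTop (nhds xbar))
    (hfeas : ∀ᵐ t ∂μ, (g xbar : Ω → ℝ) t ≤ 0)
    (hptg : ∀ᵐ t ∂μ,
      Tendsto (fun k => (g (xs (k + 1)) : Ω → ℝ) t) atTop (nhds ((g xbar : Ω → ℝ) t)))
    (hdom : ∃ G : Ω → ℝ, MemLp G 2 μ ∧
      ∀ k, ∀ᵐ t ∂μ, |(g (xs (k + 1)) : Ω → ℝ) t| ≤ G t)
    (wbar : Ω → ℝ)
    (hptw : ∀ᵐ t ∂μ, Tendsto (fun k => (w k : Ω → ℝ) t) atTop (nhds (wbar t))) :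
    Tendsto
      (fun k => (inner ℝ ((w k + ρ k • g (xs (k + 1))) ⊔ 0)
        ((-(g (xs (k + 1)))) ⊔ 0) : ℝ)) atTop (nhds 0) :=
  asymptotic_complementarity_general μ g w hwbd ρ hρ xs
end

section
/- Let X, Y be Banach spaces, K_Y ⊆ Y a closed convex cone with dual cone K_Y⁺ ⊆ Y*. Suppose x ∈ X is a point where g : X → Y is continuously Fréchet differentiable and the Zowe–Kurcyusz condition g'(x)X + cone(K_Y + g(x)) = Y holds, which by the open mapping principle yields r > 0 with B_r^Y ⊆ g'(x)B₁^X + (K_Y + g(x)) ∩ B₁^Y. Let (xᵏ) → x in X and (λᵏ) ⊆ K_Y⁺ satisfy f'(xᵏ) + g'(xᵏ)*λᵏ → 0 in X* and ⟨λᵏ, g₋(xᵏ)⟩ → 0 (where g₋ is the negative part with respect to the order). Then (λᵏ) is bounded in Y*. -/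
/-!
The Zowe–Kurcyusz condition writes every `y ∈ Y` as `g'(x)v + c(z + g(x))` with `z ∈ K`,
`c ≥ 0`, so every `μ ∈ K⁺` satisfies `-μ y ≤ (‖v‖ + c) (‖μ ∘ g'(x)‖ + (-μ (g x))⁺)`.
Applying this to `y` and `-y`, the functionals of `K⁺` on which the right-hand factor is at
most `1` are pointwise bounded, hence uniformly bounded by Banach–Steinhaus, and by
homogeneity `‖μ‖ ≤ C (‖μ ∘ g'(x)‖ + (-μ (g x))⁺)` on all of `K⁺`. For `μ = λᵏ` the right-hand
side is at most a convergent sequence plus `‖λᵏ‖` times a null sequence: `λᵏ ∘ g'(xᵏ)` is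
`-f'(xᵏ) + o(1)`, `⟨λᵏ, g(xᵏ)⟩ ≥ -⟨λᵏ, g₋(xᵏ)⟩`, and replacing `xᵏ` by `x` costs `‖λᵏ‖ o(1)`.
-/

open Filter Topology

section

variable {X Y : Type*} [NormedAddCommGroup X] [NormedSpace ℝ X]
  [NormedAddCommGroup Y] [NormedSpace ℝ Y]

def ZoweKurcyusz (A : X →L[ℝ] Y) (a : Y) (K : Set Y) : Prop :=
  ∀ y : Y, ∃ v : X, ∃ c : ℝ, 0 ≤ c ∧ ∃ z ∈ K, y = A v + c • (z + a)

variable {K : Set Y} {μ : Y →L[ℝ] ℝ}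

theorem neg_apply_add_smul_le (hμ : ∀ y ∈ K, 0 ≤ μ y) (A : X →L[ℝ] Y) (a : Y) (v : X)
    {c : ℝ} (hc : 0 ≤ c) {z : Y} (hz : z ∈ K) :
    -μ (A v + c • (z + a)) ≤ (‖v‖ + c) * (‖μ.comp A‖ + max (-μ a) 0) := by
  have hAv : -μ (A v) ≤ ‖μ.comp A‖ * ‖v‖ :=
    (neg_le_abs _).trans ((μ.comp A).le_opNorm v)
  simp only [map_add, map_smul, smul_eq_mul]
  linarith [mul_nonneg hc (hμ z hz), mul_le_mul_of_nonneg_left (le_max_left (-μ a) 0) hc,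
    mul_nonneg (norm_nonneg v) (le_max_right (-μ a) 0), mul_nonneg hc (norm_nonneg (μ.comp A))]

namespace ZoweKurcyusz

variable [CompleteSpace Y] {A : X →L[ℝ] Y} {a : Y}

theorem exists_norm_le_of_le_one (h : ZoweKurcyusz A a K) :
    ∃ C, ∀ μ : Y →L[ℝ] ℝ, (∀ y ∈ K, 0 ≤ μ y) →
      ‖μ.comp A‖ + max (-μ a) 0 ≤ 1 → ‖μ‖ ≤ C := by
  let ι := {μ : Y →L[ℝ] ℝ // (∀ y ∈ K, 0 ≤ μ y) ∧ ‖μ.comp A‖ + max (-μ a) 0 ≤ 1}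
  have hpt : ∀ y, ∃ C, ∀ i : ι, ‖(i : Y →L[ℝ] ℝ) y‖ ≤ C := by
    intro y
    obtain ⟨v, c, hc, z, hz, rfl⟩ := h y
    obtain ⟨v', c', hc', z', hz', hy'⟩ := h (-(A v + c • (z + a)))
    refine ⟨max (‖v‖ + c) (‖v'‖ + c'), fun ⟨μ, hμ, hM⟩ => ?_⟩
    have h₁ := neg_apply_add_smul_le hμ A a v hc hz
    have h₂ := neg_apply_add_smul_le hμ A a v' hc' hz'
    rw [← hy', map_neg, neg_neg] at h₂
    rw [Real.norm_eq_abs, abs_le]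
    constructor <;> nlinarith [le_max_left (‖v‖ + c) (‖v'‖ + c'),
      le_max_right (‖v‖ + c) (‖v'‖ + c'), norm_nonneg v, norm_nonneg v']
  obtain ⟨C, hC⟩ := banach_steinhaus hpt
  exact ⟨C, fun μ hμ hM => hC ⟨μ, hμ, hM⟩⟩

theorem exists_norm_le_mul (h : ZoweKurcyusz A a K) :
    ∃ C ≥ 0, ∀ μ : Y →L[ℝ] ℝ, (∀ y ∈ K, 0 ≤ μ y) →
      ‖μ‖ ≤ C * (‖μ.comp A‖ + max (-μ a) 0) := by
  obtain ⟨C, hC⟩ := h.exists_norm_le_of_le_one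
  have hC₀ : 0 ≤ C := (norm_nonneg _).trans (hC 0 (by simp) (by simp))
  refine ⟨C, hC₀, fun μ hμ => ?_⟩
  set m := ‖μ.comp A‖ + max (-μ a) 0
  have hscale : ∀ ε > 0, ‖μ‖ ≤ C * (m + ε) := by
    intro ε hε
    have hmε : 0 < m + ε := by positivity
    have hinv : 0 ≤ (m + ε)⁻¹ := inv_nonneg.2 hmε.le
    have hsmul := hC ((m + ε)⁻¹ • μ) (fun y hy => mul_nonneg hinv (hμ y hy)) (by
      rw [ContinuousLinearMap.smul_comp, norm_smul, Real.norm_of_nonneg hinv, smul_apply,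
        smul_eq_mul, ← mul_neg, ← mul_zero (m + ε)⁻¹, ← mul_max_of_nonneg _ _ hinv,
        ← mul_add, inv_mul_le_iff₀ hmε]
      linarith)
    rwa [norm_smul, Real.norm_of_nonneg hinv, inv_mul_le_iff₀ hmε, mul_comm] at hsmul
  have hlim : Tendsto (fun ε => C * (m + ε)) (𝓝[>] 0) (𝓝 (C * (m + 0))) :=
    ((continuous_const.mul (continuous_const.add continuous_id)).tendsto 0).mono_left
      nhdsWithin_le_nhds
  simpa using ge_of_tendsto hlim (eventually_nhdsWithin_of_forall hscale)

end ZoweKurcyusz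

theorem norm_comp_le_norm_add_comp (φ : X →L[ℝ] ℝ) (μ : Y →L[ℝ] ℝ) (A B : X →L[ℝ] Y) :
    ‖μ.comp A‖ ≤ ‖φ + μ.comp B‖ + ‖φ‖ + ‖μ‖ * ‖B - A‖ := by
  have hsplit : μ.comp A = (φ + μ.comp B) - φ - μ.comp (B - A) := by
    ext; simp
  calc ‖μ.comp A‖ ≤ ‖φ + μ.comp B‖ + ‖φ‖ + ‖μ.comp (B - A)‖ := by
        rw [hsplit]; exact (norm_sub_le _ _).trans (by gcongr; exact norm_sub_le _ _)
    _ ≤ ‖φ + μ.comp B‖ + ‖φ‖ + ‖μ‖ * ‖B - A‖ := by gcongr; exact μ.opNorm_comp_le _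

theorem max_neg_apply_le (hμ : ∀ y ∈ K, 0 ≤ μ y) {a b bplus bminus : Y}
    (hb : b = bplus - bminus) (hplus : bplus ∈ K) (hminus : bminus ∈ K) :
    max (-μ a) 0 ≤ μ bminus + ‖μ‖ * ‖b - a‖ := by
  have hdiff : μ (b - a) ≤ ‖μ‖ * ‖b - a‖ := (le_abs_self _).trans (μ.le_opNorm _)
  have hb' : μ b = μ bplus - μ bminus := by rw [hb, map_sub]
  have hnorm := mul_nonneg (norm_nonneg μ) (norm_nonneg (b - a))
  rw [map_sub] at hdiff
  exact max_le (by linarith [hμ _ hplus]) (by linarith [hμ _ hminus])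

end

theorem exists_forall_le_of_le_add_mul {s a e : ℕ → ℝ} {α : ℝ} (hs : ∀ k, 0 ≤ s k)
    (ha : Tendsto a atTop (𝓝 α)) (he : Tendsto e atTop (𝓝 0))
    (h : ∀ k, s k ≤ a k + s k * e k) : ∃ C, ∀ k, s k ≤ C := by
  have hev : ∀ᶠ k in atTop, s k ≤ 2 * (α + 1) := by
    filter_upwards [ha.eventually_lt_const (lt_add_one α),
      he.eventually_lt_const one_half_pos] with k hak hek
    nlinarith [h k, hs k]
  obtain ⟨C, hC⟩ := (isBoundedUnder_of_eventually_le hev).bddAbove_range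
  exact ⟨C, fun k => hC ⟨k, rfl⟩⟩

theorem multipliers_bounded_of_zowe_kurcyusz_general
    {X : Type*} [NormedAddCommGroup X] [NormedSpace ℝ X]
    {Y : Type*} [NormedAddCommGroup Y] [NormedSpace ℝ Y] [CompleteSpace Y]
    (K : Set Y)
    (g gplus gminus : X → Y)
    (f' : X → (X →L[ℝ] ℝ)) (g' : X → (X →L[ℝ] Y))
    (hf'c : Continuous f')
    (hg : ∀ z, HasFDerivAt g (g' z) z) (hg'c : Continuous g')
    (hdecomp : ∀ z, g z = gplus z - gminus z ∧ gplus z ∈ K ∧ gminus z ∈ K)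
    (x : X)
    -- Zowe–Kurcyusz condition: `g'(x)X + cone(K + g(x)) = Y`
    (hZK : ∀ y : Y, ∃ v : X, ∃ c : ℝ, 0 ≤ c ∧ ∃ z ∈ K,
      y = g' x v + c • (z + g x))
    (xs : ℕ → X) (hxs : Tendsto xs atTop (nhds x))
    (lam : ℕ → (Y →L[ℝ] ℝ))
    (hdual : ∀ k, ∀ y ∈ K, 0 ≤ lam k y)
    (hres : Tendsto (fun k => f' (xs k) + (lam k).comp (g' (xs k)))
      atTop (nhds 0))
    (hcomp : Tendsto (fun k => lam k (gminus (xs k))) atTop (nhds 0)) :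
    ∃ C : ℝ, ∀ k, ‖lam k‖ ≤ C := by
  obtain ⟨C, hC₀, hC⟩ := ZoweKurcyusz.exists_norm_le_mul hZK
  have hgc : Continuous g := continuous_iff_continuousAt.2 fun z => (hg z).continuousAt
  have hg'lim := tendsto_iff_norm_sub_tendsto_zero.1 ((hg'c.tendsto x).comp hxs)
  have hglim := tendsto_iff_norm_sub_tendsto_zero.1 ((hgc.tendsto x).comp hxs)
  refine exists_forall_le_of_le_add_mul (fun k => norm_nonneg (lam k))
    ((hres.norm.add ((hf'c.tendsto x).comp hxs).norm).add hcomp |>.const_mul C)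
    (by simpa using (hg'lim.add hglim).const_mul C) fun k => ?_
  obtain ⟨hgk, hplus, hminus⟩ := hdecomp (xs k)
  calc ‖lam k‖ ≤ C * (‖(lam k).comp (g' x)‖ + max (-lam k (g x)) 0) := hC _ (hdual k)
    _ ≤ C * ((‖f' (xs k) + (lam k).comp (g' (xs k))‖ + ‖f' (xs k)‖
          + ‖lam k‖ * ‖g' (xs k) - g' x‖)
          + (lam k (gminus (xs k)) + ‖lam k‖ * ‖g (xs k) - g x‖)) := by
        gcongr
        · exact norm_comp_le_norm_add_comp _ _ _ _
        · exact max_neg_apply_le (hdual k) hgk hplus hminus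
    _ = _ := by simp only [Function.comp_apply]; ring

/-- **Theorem 5.5 (a).** Let `X, Y` be Banach spaces,
`K ⊆ Y` a closed convex cone, `f : X → ℝ` and `g : X → Y` continuously
Fréchet differentiable, `g = g₊ - g₋` with `g₊, g₋` taking values in `K`.
Suppose the Zowe–Kurcyusz condition `g'(x)X + cone(K + g(x)) = Y` holds at a
point `x`, `xᵏ → x`, the multipliers `λᵏ` lie in the dual cone `K⁺`,
`f'(xᵏ) + g'(xᵏ)*λᵏ → 0` in `X*` and `⟨λᵏ, g₋(xᵏ)⟩ → 0`. Then `(λᵏ)` is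
bounded in `Y*`. -/
theorem multipliers_bounded_of_zowe_kurcyusz
    {X : Type*} [NormedAddCommGroup X] [NormedSpace ℝ X] [CompleteSpace X]
    {Y : Type*} [NormedAddCommGroup Y] [NormedSpace ℝ Y] [CompleteSpace Y]
    (K : Set Y) (hKcl : IsClosed K) (hKco : Convex ℝ K)
    (hKcone : ∀ c : ℝ, 0 ≤ c → ∀ y ∈ K, c • y ∈ K)
    (f : X → ℝ) (g gplus gminus : X → Y)
    (f' : X → (X →L[ℝ] ℝ)) (g' : X → (X →L[ℝ] Y))
    (hf : ∀ z, HasFDerivAt f (f' z) z) (hf'c : Continuous f')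
    (hg : ∀ z, HasFDerivAt g (g' z) z) (hg'c : Continuous g')
    (hdecomp : ∀ z, g z = gplus z - gminus z ∧ gplus z ∈ K ∧ gminus z ∈ K)
    (x : X)
    -- Zowe–Kurcyusz condition: `g'(x)X + cone(K + g(x)) = Y`
    (hZK : ∀ y : Y, ∃ v : X, ∃ c : ℝ, 0 ≤ c ∧ ∃ z ∈ K,
      y = g' x v + c • (z + g x))
    (xs : ℕ → X) (hxs : Tendsto xs atTop (nhds x))
    (lam : ℕ → (Y →L[ℝ] ℝ))
    (hdual : ∀ k, ∀ y ∈ K, 0 ≤ lam k y)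
    (hres : Tendsto (fun k => f' (xs k) + (lam k).comp (g' (xs k)))
      atTop (nhds 0))
    (hcomp : Tendsto (fun k => lam k (gminus (xs k))) atTop (nhds 0)) :
    ∃ C : ℝ, ∀ k, ‖lam k‖ ≤ C :=
  multipliers_bounded_of_zowe_kurcyusz_general K g gplus gminus f' g' hf'c hg hg'c hdecomp x hZK xs
    hxs lam hdual hres hcomp
end
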